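/- arXiv:math/0201020 — 3 statements merged into one kernel-verified Lean document; each statement's English description precedes it below -/
import Mathlib

section
/- Let G be a compact group acting continuously and linearly on a finite-dimensional real inner product space V with G-invariant inner product, and suppose the action is irreducible (V has no proper nonzero G-invariant subspace). Then for all x, v in V, the integral over G (with respect to the Haar probability measure dg) of ⟨x, g•v⟩² equals ‖v‖²·‖x‖²/dim V. -/
/-!
Average the rank-one projections onto the orbit of `v`: `A = ∫ ⟪g v, ·⟫ g v dg`. This operator is
symmetric and, by invariance of the Haar measure and of the inner product, commutes with every
`ρ g`; an eigenspace of `A` is therefore a nonzero invariant subspace, so irreducibility forces `A`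
to be a scalar `c`. Its trace is `∫ ‖g v‖² dg = ‖v‖²`, hence `c = ‖v‖² / dim V`, and the integral
in question is `⟪x, A x⟫ = c ‖x‖²`.
-/

open MeasureTheory InnerProductSpace

section Schur

variable {G V : Type*} [Monoid G] [NormedAddCommGroup V] [InnerProductSpace ℝ V]
  [FiniteDimensional ℝ V]

theorem LinearMap.IsSymmetric.exists_eq_smul_one_of_commute (ρ : Representation ℝ G V)
    (hirr : ∀ W : Submodule ℝ V, (∀ (g : G), ∀ w ∈ W, ρ g w ∈ W) → W = ⊥ ∨ W = ⊤)
    {T : V →ₗ[ℝ] V} (hT : T.IsSymmetric) (hcomm : ∀ g, Commute T (ρ g)) :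
    ∃ c : ℝ, T = c • 1 := by
  rcases subsingleton_or_nontrivial V with hV | hV
  · exact ⟨0, Subsingleton.elim _ _⟩
  obtain ⟨c, hc⟩ : ∃ c : ℝ, Module.End.HasEigenvalue T c :=
    ⟨_, hT.hasEigenvalue_iSup_of_finiteDimensional⟩
  have hinv : ∀ g, ∀ w ∈ Module.End.eigenspace T c, ρ g w ∈ Module.End.eigenspace T c :=
    fun g => Module.End.mapsTo_genEigenspace_of_comm (hcomm g) c 1
  have htop : Module.End.eigenspace T c = ⊤ := (hirr _ hinv).resolve_left hc
  refine ⟨c, LinearMap.ext fun w => ?_⟩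
  exact Module.End.mem_eigenspace_iff.mp (htop ▸ Submodule.mem_top)

end Schur

section OrbitFrameOperator

variable {G V : Type*} [Group G] [MeasurableSpace G] [NormedAddCommGroup V]
  [InnerProductSpace ℝ V]

noncomputable def orbitFrameOperator (μ : Measure G) (ρ : Representation ℝ G V) (v : V) :
    V →L[ℝ] V :=
  ∫ g, rankOne ℝ (ρ g v) (ρ g v) ∂μ

variable [TopologicalSpace G] [CompactSpace G] [OpensMeasurableSpace G]
  (μ : Measure G) [IsFiniteMeasure μ] (ρ : Representation ℝ G V) {v : V}

theorem integrable_rankOne_orbit (hv : Continuous fun g => ρ g v) :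
    Integrable (fun g => rankOne ℝ (ρ g v) (ρ g v)) μ :=
  (((rankOne ℝ).continuous.comp hv).clm_apply hv).integrable_of_hasCompactSupport
    (.of_compactSpace _)

theorem integrable_inner_smul_orbit (hv : Continuous fun g => ρ g v) (y : V) :
    Integrable (fun g => inner ℝ (ρ g v) y • ρ g v) μ :=
  (integrable_rankOne_orbit μ ρ hv).apply_continuousLinearMap y

theorem orbitFrameOperator_apply (hv : Continuous fun g => ρ g v) (y : V) :
    orbitFrameOperator μ ρ v y = ∫ g, inner ℝ (ρ g v) y • ρ g v ∂μ :=
  ContinuousLinearMap.integral_apply (integrable_rankOne_orbit μ ρ hv) y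

theorem inner_orbitFrameOperator [CompleteSpace V] (hv : Continuous fun g => ρ g v) (x y : V) :
    inner ℝ x (orbitFrameOperator μ ρ v y)
      = ∫ g, inner ℝ (ρ g v) x * inner ℝ (ρ g v) y ∂μ := by
  rw [orbitFrameOperator_apply μ ρ hv,
    ← integral_inner (integrable_inner_smul_orbit μ ρ hv y)]
  simp only [real_inner_smul_right, real_inner_comm x, mul_comm]

theorem isSymmetric_orbitFrameOperator [CompleteSpace V] (hv : Continuous fun g => ρ g v) :
    (orbitFrameOperator μ ρ v : V →ₗ[ℝ] V).IsSymmetric := fun x y => by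
  rw [ContinuousLinearMap.coe_coe, real_inner_comm, inner_orbitFrameOperator μ ρ hv,
    inner_orbitFrameOperator μ ρ hv]
  simp only [mul_comm]

theorem trace_orbitFrameOperator [FiniteDimensional ℝ V] [IsProbabilityMeasure μ]
    (hv : Continuous fun g => ρ g v) (horth : ∀ g, ‖ρ g v‖ = ‖v‖) :
    LinearMap.trace ℝ V (orbitFrameOperator μ ρ v) = ‖v‖ ^ 2 := by
  let traceCLM : (V →L[ℝ] V) →L[ℝ] ℝ :=
    LinearMap.toContinuousLinearMap (LinearMap.trace ℝ V ∘ₗ ContinuousLinearMap.coeLM ℝ)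
  calc LinearMap.trace ℝ V (orbitFrameOperator μ ρ v)
      = ∫ g, traceCLM (rankOne ℝ (ρ g v) (ρ g v)) ∂μ :=
        (traceCLM.integral_comp_comm (integrable_rankOne_orbit μ ρ hv)).symm
    _ = ‖v‖ ^ 2 := by simp [traceCLM, trace_rankOne, horth]

theorem orbitFrameOperator_map [MeasurableMul G] [μ.IsMulLeftInvariant] [FiniteDimensional ℝ V]
    (hv : Continuous fun g => ρ g v)
    (horth : ∀ (g : G) (x y : V), inner ℝ (ρ g x) (ρ g y) = (inner ℝ x y : ℝ)) (h : G) (y : V) :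
    orbitFrameOperator μ ρ v (ρ h y) = ρ h (orbitFrameOperator μ ρ v y) := by
  have := FiniteDimensional.complete ℝ V
  let ρh : V →L[ℝ] V := LinearMap.toContinuousLinearMap (ρ h)
  calc orbitFrameOperator μ ρ v (ρ h y)
      = ∫ g, inner ℝ (ρ (h * g) v) (ρ h y) • ρ (h * g) v ∂μ := by
        rw [orbitFrameOperator_apply μ ρ hv,
          integral_mul_left_eq_self (fun g => inner ℝ (ρ g v) (ρ h y) • ρ g v)]
    _ = ∫ g, ρh (inner ℝ (ρ g v) y • ρ g v) ∂μ := by simp [ρh, map_mul, horth]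
    _ = ρ h (orbitFrameOperator μ ρ v y) := by
        rw [ρh.integral_comp_comm (integrable_inner_smul_orbit μ ρ hv y),
          orbitFrameOperator_apply μ ρ hv]
        rfl

theorem orbitFrameOperator_eq_smul_one [MeasurableMul G] [μ.IsMulLeftInvariant]
    [IsProbabilityMeasure μ] [FiniteDimensional ℝ V] (hv : Continuous fun g => ρ g v)
    (horth : ∀ (g : G) (x y : V), inner ℝ (ρ g x) (ρ g y) = (inner ℝ x y : ℝ))
    (hirr : ∀ W : Submodule ℝ V, (∀ (g : G), ∀ w ∈ W, ρ g w ∈ W) → W = ⊥ ∨ W = ⊤) :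
    (orbitFrameOperator μ ρ v : V →ₗ[ℝ] V) = (‖v‖ ^ 2 / Module.finrank ℝ V) • 1 := by
  have := FiniteDimensional.complete ℝ V
  obtain ⟨c, hc⟩ := (isSymmetric_orbitFrameOperator μ ρ hv).exists_eq_smul_one_of_commute ρ hirr
    fun h => LinearMap.ext fun y => orbitFrameOperator_map μ ρ hv horth h y
  have htrace := trace_orbitFrameOperator μ ρ hv fun g => by
    rw [norm_eq_sqrt_real_inner, horth, ← norm_eq_sqrt_real_inner]
  rw [hc, map_smul, LinearMap.trace_one, smul_eq_mul] at htrace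
  rcases (Module.finrank ℝ V).eq_zero_or_pos with hn | hn
  · have := Module.finrank_zero_iff.mp hn
    exact Subsingleton.elim _ _
  · rw [hc, ← htrace, mul_div_cancel_right₀ _ (Nat.cast_ne_zero.mpr hn.ne')]

end OrbitFrameOperator

/-- Lemma 2.1: orthogonality relations for matrix elements of a real
irreducible representation of a compact group. -/
theorem stmt_0
    {G : Type*} [Group G] [TopologicalSpace G] [IsTopologicalGroup G]
    [CompactSpace G] [MeasurableSpace G] [BorelSpace G]
    (μ : Measure G) [μ.IsHaarMeasure] [IsProbabilityMeasure μ]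
    {V : Type*} [NormedAddCommGroup V] [InnerProductSpace ℝ V]
    [FiniteDimensional ℝ V]
    (ρ : Representation ℝ G V)
    (hcont : ∀ w : V, Continuous fun g : G => ρ g w)
    (horth : ∀ (g : G) (x y : V), (inner ℝ (ρ g x) (ρ g y) : ℝ) = inner ℝ x y)
    (hirr : ∀ W : Submodule ℝ V, (∀ (g : G), ∀ w ∈ W, ρ g w ∈ W) → W = ⊥ ∨ W = ⊤)
    (x v : V) :
    ∫ g, (inner ℝ x (ρ g v) : ℝ) ^ 2 ∂μ
      = ‖v‖ ^ 2 * ‖x‖ ^ 2 / (Module.finrank ℝ V) := by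
  have := FiniteDimensional.complete ℝ V
  calc ∫ g, (inner ℝ x (ρ g v) : ℝ) ^ 2 ∂μ = inner ℝ x (orbitFrameOperator μ ρ v x) := by
        simp only [inner_orbitFrameOperator μ ρ (hcont v), real_inner_comm x, sq]
    _ = ‖v‖ ^ 2 * ‖x‖ ^ 2 / (Module.finrank ℝ V) := by
        rw [← ContinuousLinearMap.coe_coe, orbitFrameOperator_eq_smul_one μ ρ (hcont v) horth hirr,
          LinearMap.smul_apply, Module.End.one_apply, real_inner_smul_right,
          real_inner_self_eq_norm_sq]
        ring
end

section
/- Let G be a compact group acting continuously and orthogonally on a finite-dimensional real inner product space V, and fix v ∈ V. Then there exists a decomposition V = V₁ ⊕ ... ⊕ V_k into nonzero pairwise orthogonal G-invariant subspaces such that for every x ∈ V, ∫_G ⟨x, g•v⟩² dg = ∑_{i=1}^k ‖x_i‖²·‖v_i‖²/dim V_i, where x_i and v_i denote the orthogonal projections of x and v onto V_i. -/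
/-!
The averaged operator `T x = ∫ ⟪g v, x⟫ • g v dg` is symmetric and, by invariance of Haar
measure, commutes with every `ρ g`. Its eigenspaces are therefore pairwise orthogonal invariant
subspaces spanning `V`, and `∫ ⟪x, g v⟫² dg = ⟪T x, x⟫ = ∑ λ ‖x_λ‖²`. Computing the trace of `T`
on the eigenspace `V_λ` in an orthonormal basis gives `λ · dim V_λ = ∫ ‖(g v)_λ‖² dg = ‖v_λ‖²`,
because the projection onto an invariant subspace commutes with the isometries `ρ g`.
-/

open MeasureTheory InnerProductSpace Module Module.End
open scoped RealInnerProductSpace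

section SecondMoment

variable {X : Type*} [MeasurableSpace X] {μ : Measure X}
  {V : Type*} [NormedAddCommGroup V] [InnerProductSpace ℝ V]

variable (μ) in
noncomputable def secondMomentOperator (f : X → V) : V →ₗ[ℝ] V :=
  (∫ t, rankOne ℝ (f t) (f t) ∂μ : V →L[ℝ] V)

variable {f : X → V}

theorem secondMomentOperator_apply (hf : Integrable (fun t => rankOne ℝ (f t) (f t)) μ) (x : V) :
    secondMomentOperator μ f x = ∫ t, ⟪f t, x⟫ • f t ∂μ :=
  ContinuousLinearMap.integral_apply hf x

theorem integrable_inner_smul (hf : Integrable (fun t => rankOne ℝ (f t) (f t)) μ) (x : V) :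
    Integrable (fun t => ⟪f t, x⟫ • f t) μ :=
  hf.apply_continuousLinearMap x

theorem integrable_inner_mul_inner (hf : Integrable (fun t => rankOne ℝ (f t) (f t)) μ)
    (x y : V) : Integrable (fun t => ⟪x, f t⟫ * ⟪y, f t⟫) μ := by
  refine ((integrable_inner_smul hf x).const_inner y).congr (.of_forall fun t => ?_)
  simp [real_inner_smul_right, real_inner_comm]

theorem inner_secondMomentOperator_apply [CompleteSpace V]
    (hf : Integrable (fun t => rankOne ℝ (f t) (f t)) μ)
    (x y : V) : ⟪secondMomentOperator μ f x, y⟫ = ∫ t, ⟪x, f t⟫ * ⟪y, f t⟫ ∂μ := by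
  rw [real_inner_comm, secondMomentOperator_apply hf,
    ← integral_inner (integrable_inner_smul hf x) y]
  simp [real_inner_smul_right, real_inner_comm]

theorem isSymmetric_secondMomentOperator [CompleteSpace V]
    (hf : Integrable (fun t => rankOne ℝ (f t) (f t)) μ) :
    (secondMomentOperator μ f).IsSymmetric := fun x y => by
  rw [inner_secondMomentOperator_apply hf, real_inner_comm, inner_secondMomentOperator_apply hf]
  simp_rw [mul_comm]

theorem sum_inner_secondMomentOperator_orthonormalBasis [CompleteSpace V]
    (hf : Integrable (fun t => rankOne ℝ (f t) (f t)) μ)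
    (W : Submodule ℝ V) [W.HasOrthogonalProjection] {ι : Type*} [Fintype ι]
    (b : OrthonormalBasis ι ℝ W) :
    ∑ j, ⟪secondMomentOperator μ f (b j), b j⟫ =
      ∫ t, ‖W.orthogonalProjectionOnto (f t)‖ ^ 2 ∂μ := by
  simp_rw [inner_secondMomentOperator_apply hf, ← sq]
  rw [← integral_finsetSum _ fun j _ => by
    simpa [sq] using integrable_inner_mul_inner hf (b j : V) (b j)]
  simp_rw [← Submodule.inner_orthogonalProjectionOnto_eq_of_mem_left, b.sum_sq_inner_right]

end SecondMoment

theorem LinearMap.IsSymmetric.inner_apply_self_eq_sum {E : Type*} [NormedAddCommGroup E]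
    [InnerProductSpace ℝ E] [FiniteDimensional ℝ E] {T : E →ₗ[ℝ] E} (hT : T.IsSymmetric)
    (x : E) :
    ⟪T x, x⟫ =
      ∑ c : Eigenvalues T, (c : ℝ) * ‖(eigenspace T c).orthogonalProjectionOnto x‖ ^ 2 := by
  have hx : ∑ c : Eigenvalues T, (eigenspace T c).starProjection x = x :=
    hT.orthogonalFamily_eigenspaces'.sum_projection_of_mem_iSup x
      (hT.direct_sum_isInternal.submodule_iSup_eq_top ▸ Submodule.mem_top)
  nth_rewrite 1 [← hx]
  rw [map_sum, sum_inner]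
  refine Finset.sum_congr rfl fun c _ => ?_
  rw [mem_eigenspace_iff.mp (Submodule.starProjection_apply_mem _ x), real_inner_smul_left,
    ← Submodule.re_inner_starProjection_eq_normSq, RCLike.re_to_real]

section OrthogonalRepresentation

variable {G : Type*} [Group G] {V : Type*} [NormedAddCommGroup V] [InnerProductSpace ℝ V]
  {ρ : Representation ℝ G V}

theorem Representation.starProjection_apply_of_invariant
    (horth : ∀ (g : G) (x y : V), ⟪ρ g x, ρ g y⟫ = ⟪x, y⟫)
    {W : Submodule ℝ V} [W.HasOrthogonalProjection] (hW : ∀ g, ∀ w ∈ W, ρ g w ∈ W)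
    (g : G) (x : V) : W.starProjection (ρ g x) = ρ g (W.starProjection x) := by
  refine Submodule.eq_starProjection_of_mem_of_inner_eq_zero
    (hW g _ (W.starProjection_apply_mem x)) fun w hw => ?_
  rw [← map_sub, ← ρ.self_inv_apply g w, horth]
  exact W.sub_starProjection_mem_orthogonal x _ (hW g⁻¹ w hw) |> (real_inner_comm _ _).trans

theorem Representation.norm_starProjection_apply_of_invariant
    (horth : ∀ (g : G) (x y : V), ⟪ρ g x, ρ g y⟫ = ⟪x, y⟫)
    {W : Submodule ℝ V} [W.HasOrthogonalProjection] (hW : ∀ g, ∀ w ∈ W, ρ g w ∈ W)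
    (g : G) (x : V) : ‖W.starProjection (ρ g x)‖ = ‖W.starProjection x‖ := by
  rw [ρ.starProjection_apply_of_invariant horth hW]
  exact ((ρ g).isometryOfInner (horth g)).norm_map _

variable [MeasurableSpace G] [MeasurableMul G] {μ : Measure G} [μ.IsMulLeftInvariant]
  [CompleteSpace V]

theorem secondMomentOperator_apply_rep (horth : ∀ (g : G) (x y : V), ⟪ρ g x, ρ g y⟫ = ⟪x, y⟫)
    {v : V} (hf : Integrable (fun g => rankOne ℝ (ρ g v) (ρ g v)) μ) (h : G) (x : V) :
    secondMomentOperator μ (ρ · v) (ρ h x) = ρ h (secondMomentOperator μ (ρ · v) x) := by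
  let L := ((ρ h).isometryOfInner (horth h)).toContinuousLinearMap
  have hL : ∀ w, L w = ρ h w := fun _ => rfl
  rw [secondMomentOperator_apply hf, secondMomentOperator_apply hf, ← hL (∫ _, _ ∂μ),
    ← L.integral_comp_comm (integrable_inner_smul hf x),
    ← integral_mul_left_eq_self _ h]
  simp only [hL, map_mul, Module.End.mul_apply, horth, map_smul]

theorem rep_apply_mem_eigenspace_secondMomentOperator
    (horth : ∀ (g : G) (x y : V), ⟪ρ g x, ρ g y⟫ = ⟪x, y⟫)
    {v : V} (hf : Integrable (fun g => rankOne ℝ (ρ g v) (ρ g v)) μ) (c : ℝ) (g : G) :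
    ∀ w ∈ eigenspace (secondMomentOperator μ (ρ · v)) c,
      ρ g w ∈ eigenspace (secondMomentOperator μ (ρ · v)) c := by
  intro w hw
  rw [mem_eigenspace_iff] at hw ⊢
  rw [secondMomentOperator_apply_rep horth hf, hw, map_smul]

theorem eigenvalue_mul_finrank_eigenspace_secondMomentOperator [FiniteDimensional ℝ V]
    [IsProbabilityMeasure μ] (horth : ∀ (g : G) (x y : V), ⟪ρ g x, ρ g y⟫ = ⟪x, y⟫)
    {v : V} (hf : Integrable (fun g => rankOne ℝ (ρ g v) (ρ g v)) μ) (c : ℝ) :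
    c * finrank ℝ (eigenspace (secondMomentOperator μ (ρ · v)) c) =
      ‖(eigenspace (secondMomentOperator μ (ρ · v)) c).orthogonalProjectionOnto v‖ ^ 2 := by
  set W := eigenspace (secondMomentOperator μ (ρ · v)) c
  let b := stdOrthonormalBasis ℝ W
  have hb : ∀ j, ⟪secondMomentOperator μ (ρ · v) (b j), b j⟫ = c := fun j => by
    rw [mem_eigenspace_iff.mp (b j).2, real_inner_smul_left, real_inner_self_eq_norm_sq,
      Submodule.norm_coe, b.orthonormal.1 j, one_pow, mul_one]
  calc c * finrank ℝ W = ∑ j, ⟪secondMomentOperator μ (ρ · v) (b j), b j⟫ := by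
        simp [hb, mul_comm]
    _ = ∫ g, ‖W.orthogonalProjectionOnto (ρ g v)‖ ^ 2 ∂μ :=
        sum_inner_secondMomentOperator_orthonormalBasis hf W b
    _ = ∫ _, ‖W.orthogonalProjectionOnto v‖ ^ 2 ∂μ := by
        congr! 3 with g
        exact ρ.norm_starProjection_apply_of_invariant horth
          (rep_apply_mem_eigenspace_secondMomentOperator horth hf c) g v
    _ = ‖W.orthogonalProjectionOnto v‖ ^ 2 := by simp

end OrthogonalRepresentation

/-- Lemma 2.2: decomposition of the second moment of a matrix element into
contributions of pairwise orthogonal invariant subspaces. -/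
theorem stmt_3
    {G : Type*} [Group G] [TopologicalSpace G] [IsTopologicalGroup G]
    [CompactSpace G] [MeasurableSpace G] [BorelSpace G]
    (μ : Measure G) [μ.IsHaarMeasure] [IsProbabilityMeasure μ]
    {V : Type*} [NormedAddCommGroup V] [InnerProductSpace ℝ V]
    [FiniteDimensional ℝ V]
    (ρ : Representation ℝ G V)
    (hcont : ∀ w : V, Continuous fun g : G => ρ g w)
    (horth : ∀ (g : G) (x y : V), (inner ℝ (ρ g x) (ρ g y) : ℝ) = inner ℝ x y)
    (v : V) :
    ∃ (k : ℕ) (W : Fin k → Submodule ℝ V),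
      (∀ i, W i ≠ ⊥) ∧
      (∀ i j, i ≠ j → ∀ x ∈ W i, ∀ y ∈ W j, (inner ℝ x y : ℝ) = 0) ∧
      (∀ i, ∀ (g : G), ∀ w ∈ W i, ρ g w ∈ W i) ∧
      (⨆ i, W i) = ⊤ ∧
      ∀ x : V,
        ∫ g, (inner ℝ x (ρ g v) : ℝ) ^ 2 ∂μ
          = ∑ i, ‖(W i).orthogonalProjectionOnto x‖ ^ 2 * ‖(W i).orthogonalProjectionOnto v‖ ^ 2
              / (Module.finrank ℝ (W i)) := by
  have hf : Integrable (fun g => rankOne ℝ (ρ g v) (ρ g v)) μ :=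
    (((rankOne ℝ).continuous.comp (hcont v)).clm_apply (hcont v))
      |>.integrable_of_hasCompactSupport (.of_compactSpace _)
  set T := secondMomentOperator μ (ρ · v)
  have hT : T.IsSymmetric := isSymmetric_secondMomentOperator hf
  let e := (Fintype.equivFin (Eigenvalues T)).symm
  refine ⟨_, fun i => eigenspace T (e i), fun i => hasEigenvalue_iff.mp (e i).2,
    fun i j hij x hx y hy => hT.orthogonalFamily_eigenspaces'.comp e.injective hij ⟨x, hx⟩ ⟨y, hy⟩,
    fun i => rep_apply_mem_eigenspace_secondMomentOperator horth hf _, ?_, fun x => ?_⟩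
  · rw [e.iSup_comp (g := fun c : Eigenvalues T => eigenspace T c)]
    exact hT.direct_sum_isInternal.submodule_iSup_eq_top
  have hx : ∫ g, ⟪x, ρ g v⟫ ^ 2 ∂μ = ⟪T x, x⟫ := by
    simpa only [sq] using (inner_secondMomentOperator_apply hf x x).symm
  rw [hx, hT.inner_apply_self_eq_sum, ← e.sum_comp]
  refine Finset.sum_congr rfl fun i _ => ?_
  have hd : (0 : ℝ) < finrank ℝ (eigenspace T (e i)) := by
    have := Submodule.nontrivial_iff_ne_bot.mpr (show eigenspace T (e i) ≠ ⊥ from (e i).2)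
    exact_mod_cast finrank_pos
  rw [mul_div_assoc, ← eigenvalue_mul_finrank_eigenspace_secondMomentOperator horth hf,
    mul_div_cancel_right₀ _ hd.ne', mul_comm]
end

section
/- Let G be a finite group acting linearly on a finite-dimensional real vector space V, let v ∈ V and let ℓ be a linear functional on V. Define f: G → ℝ by f(g) = ℓ(g•v). Then max_{g∈G} |f(g)| ≤ √(dim V) · ( (1/|G|)·∑_{g∈G} f(g)² )^{1/2}. -/
/-!
Send `x ∈ V` to its coefficient function `g ↦ ℓ (ρ g x)` in `ℓ²(G)`; the image `U` has dimension at
most `dim V` and is invariant under right translations. For `u ∈ U` we have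
`u g = ⟪P e_g, u⟫`, where `P` is the orthogonal projection onto `U`, so `|u g| ≤ ‖P e_g‖ ‖u‖`.
Translation invariance makes `‖P e_g‖` independent of `g`, and `∑ g, ‖P e_g‖² = tr P = dim U`,
hence `‖P e_g‖² = dim U / |G|`.
-/

open scoped InnerProductSpace
open Module

namespace Submodule

variable {𝕜 E ι : Type*} [RCLike 𝕜] [NormedAddCommGroup E] [InnerProductSpace 𝕜 E] [Fintype ι]

theorem norm_inner_le_norm_starProjection_mul_norm (U : Submodule 𝕜 E)
    [U.HasOrthogonalProjection] (x : E) {u : E} (hu : u ∈ U) : ‖⟪x, u⟫_𝕜‖ ≤ ‖U.starProjection x‖ * ‖u‖ := by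
  rw [← U.starProjection_eq_self_iff.mpr hu, ← inner_starProjection_left_eq_right,
    U.starProjection_eq_self_iff.mpr hu]
  exact norm_inner_le_norm _ _

theorem norm_starProjection_map (U : Submodule 𝕜 E) [U.HasOrthogonalProjection]
    (T : E ≃ₗᵢ[𝕜] E) (hT : U.map (T.toLinearEquiv : E →ₗ[𝕜] E) = U) (x : E) :
    ‖U.starProjection (T x)‖ = ‖U.starProjection x‖ := by
  have := U.starProjection_map_apply T (T x)
  simp only [hT, T.symm_apply_apply] at this
  rw [this, T.norm_map]

theorem sum_norm_starProjection_sq (U : Submodule 𝕜 E) [FiniteDimensional 𝕜 U]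
    (c : OrthonormalBasis ι 𝕜 E) : ∑ i, ‖U.starProjection (c i)‖ ^ 2 = finrank 𝕜 U := by
  let b := stdOrthonormalBasis 𝕜 U
  have hproj : ∀ x, ‖U.starProjection x‖ ^ 2 = ∑ k, ‖⟪(b k : E), x⟫_𝕜‖ ^ 2 := fun x => by
    rw [starProjection_apply, norm_coe, ← b.sum_sq_norm_inner_right]
    simp_rw [← inner_orthogonalProjectionOnto_eq_of_mem_left]
  simp_rw [hproj]
  rw [Finset.sum_comm]
  simp_rw [c.sum_sq_norm_inner_left, norm_coe, b.orthonormal.1, one_pow]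
  simp only [Finset.sum_const, Finset.card_univ, Fintype.card_fin, nsmul_one]

theorem card_mul_norm_inner_sq_le (U : Submodule 𝕜 E) [FiniteDimensional 𝕜 U]
    (c : OrthonormalBasis ι 𝕜 E)
    (htrans : ∀ i j, ∃ T : E ≃ₗᵢ[𝕜] E, T (c i) = c j ∧ U.map (T.toLinearEquiv : E →ₗ[𝕜] E) = U)
    (i : ι) {u : E} (hu : u ∈ U) :
    Fintype.card ι * ‖⟪c i, u⟫_𝕜‖ ^ 2 ≤ finrank 𝕜 U * ‖u‖ ^ 2 := by
  have hconst : ∀ j, ‖U.starProjection (c j)‖ = ‖U.starProjection (c i)‖ := fun j => by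
    obtain ⟨T, hTij, hTU⟩ := htrans i j
    rw [← hTij, U.norm_starProjection_map T hTU]
  have htrace : Fintype.card ι * ‖U.starProjection (c i)‖ ^ 2 = finrank 𝕜 U := by
    rw [← U.sum_norm_starProjection_sq c]
    simp [hconst]
  calc Fintype.card ι * ‖⟪c i, u⟫_𝕜‖ ^ 2
      ≤ Fintype.card ι * (‖U.starProjection (c i)‖ * ‖u‖) ^ 2 := by
        gcongr
        exact U.norm_inner_le_norm_starProjection_mul_norm _ hu
    _ = finrank 𝕜 U * ‖u‖ ^ 2 := by rw [mul_pow, ← mul_assoc, htrace]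

end Submodule

namespace Representation

variable {G V : Type*} [Group G] [AddCommGroup V] [Module ℝ V]

def coeffMap (ρ : Representation ℝ G V) (ℓ : V →ₗ[ℝ] ℝ) : V →ₗ[ℝ] EuclideanSpace ℝ G :=
  (WithLp.linearEquiv 2 ℝ (G → ℝ)).symm.toLinearMap ∘ₗ LinearMap.pi fun g => ℓ ∘ₗ ρ g

@[simp]
theorem coeffMap_apply (ρ : Representation ℝ G V) (ℓ : V →ₗ[ℝ] ℝ) (x : V) (g : G) :
    ρ.coeffMap ℓ x g = ℓ (ρ g x) := rfl

theorem piLpCongrLeft_mulRight_coeffMap [Fintype G] (ρ : Representation ℝ G V)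
    (ℓ : V →ₗ[ℝ] ℝ) (h : G) (x : V) :
    LinearIsometryEquiv.piLpCongrLeft 2 ℝ ℝ (Equiv.mulRight h) (ρ.coeffMap ℓ x) =
      ρ.coeffMap ℓ (ρ h⁻¹ x) := by
  ext g
  simp [Equiv.piCongrLeft']

theorem map_range_coeffMap_translate [Fintype G] (ρ : Representation ℝ G V) (ℓ : V →ₗ[ℝ] ℝ)
    (h : G) :
    (LinearMap.range (ρ.coeffMap ℓ)).map
      ((LinearIsometryEquiv.piLpCongrLeft 2 ℝ ℝ (Equiv.mulRight h)).toLinearEquiv :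
        EuclideanSpace ℝ G →ₗ[ℝ] EuclideanSpace ℝ G) = LinearMap.range (ρ.coeffMap ℓ) := by
  have hsurj : LinearMap.range (ρ h⁻¹) = ⊤ :=
    LinearMap.range_eq_top.mpr fun x => ⟨ρ h x, by simp [← Module.End.mul_apply, ← map_mul]⟩
  rw [← LinearMap.range_comp, ← LinearMap.range_comp_of_range_eq_top (ρ.coeffMap ℓ) hsurj]
  exact congr(LinearMap.range $(LinearMap.ext (piLpCongrLeft_mulRight_coeffMap ρ ℓ h)))

end Representation

/-- Finite-group version of Theorem 1.2. -/
theorem stmt_5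
    {G : Type*} [Group G] [Fintype G]
    {V : Type*} [AddCommGroup V] [Module ℝ V] [FiniteDimensional ℝ V]
    (ρ : Representation ℝ G V)
    (ℓ : V →ₗ[ℝ] ℝ) (v : V) :
    (⨆ g : G, |ℓ (ρ g v)|)
      ≤ Real.sqrt (Module.finrank ℝ V)
        * Real.sqrt ((Fintype.card G : ℝ)⁻¹ * ∑ g : G, (ℓ (ρ g v)) ^ 2) := by
  classical
  set U := LinearMap.range (ρ.coeffMap ℓ)
  have htrans : ∀ i j : G, ∃ T : EuclideanSpace ℝ G ≃ₗᵢ[ℝ] EuclideanSpace ℝ G,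
      T (EuclideanSpace.basisFun G ℝ i) = EuclideanSpace.basisFun G ℝ j ∧
        U.map (T.toLinearEquiv : EuclideanSpace ℝ G →ₗ[ℝ] EuclideanSpace ℝ G) = U :=
    fun i j => ⟨_, by simp, ρ.map_range_coeffMap_translate ℓ (i⁻¹ * j)⟩
  have hdim : (finrank ℝ U : ℝ) ≤ finrank ℝ V := by exact_mod_cast (ρ.coeffMap ℓ).finrank_range_le
  have hnorm : ‖ρ.coeffMap ℓ v‖ ^ 2 = ∑ g, ℓ (ρ g v) ^ 2 := by
    simp [EuclideanSpace.real_norm_sq_eq]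
  refine ciSup_le fun g => ?_
  have hbound := U.card_mul_norm_inner_sq_le _ htrans g (LinearMap.mem_range_self _ v)
  rw [← Real.sqrt_mul (Nat.cast_nonneg _), Real.le_sqrt (abs_nonneg _) (by positivity)]
  simp only [EuclideanSpace.basisFun_apply, EuclideanSpace.inner_single_left, map_one,
    one_mul, Representation.coeffMap_apply, Real.norm_eq_abs, sq_abs, hnorm] at hbound
  rw [sq_abs, mul_left_comm, le_inv_mul_iff₀ (by positivity)]
  exact hbound.trans (mul_le_mul_of_nonneg_right hdim (by positivity))
end
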